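/- arXiv:2209.03600 — 4 statements merged into one kernel-verified Lean document; each statement's English description precedes it below -/
import Mathlib

section
/- If η₁* > η₂* then σ₂ < Δ_μ/Δ_α < σ₃. -/
/-!
Write `p = α₂η₁` and `q = α₁η₂`, so that `Δ_α = p - q` and `Δ_μ = σ₂p - σ₁q`. Cancelling the common
factor `α₃/r`, the hypothesis `η₁* > η₂*` reads `q(σ₃ - σ₁) < p(σ₃ - σ₂)`. Then
`Δ_μ - σ₂Δ_α = q(σ₂ - σ₁) > 0` and `σ₃Δ_α - Δ_μ = p(σ₃ - σ₂) - q(σ₃ - σ₁) > 0`; adding the two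
shows `Δ_α > 0`, so both inequalities survive division by `Δ_α`.
-/

variable {α : Type*} [Field α] [LinearOrder α] [IsStrictOrderedRing α]

theorem mul_lt_mul_of_div_mul_lt_div_mul {c x₁ x₂ e₁ e₂ : α} (hc : 0 < c) (hx₁ : 0 < x₁)
    (hx₂ : 0 < x₂) (h : e₂ / (x₂ * c) < e₁ / (x₁ * c)) : e₂ * x₁ < e₁ * x₂ := by
  rw [div_lt_div_iff₀ (by positivity) (by positivity), ← mul_assoc, ← mul_assoc] at h
  exact lt_of_mul_lt_mul_right h hc.le

theorem extrapolate_mem_Ioo {s₁ s₂ s₃ p q : α} (h₁₂ : s₁ < s₂) (h₂₃ : s₂ < s₃) (hq : 0 < q)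
    (h : q * (s₃ - s₁) < p * (s₃ - s₂)) :
    (s₂ * p - s₁ * q) / (p - q) ∈ Set.Ioo s₂ s₃ := by
  have hgap : 0 < q * (s₂ - s₁) := mul_pos hq (sub_pos.2 h₁₂)
  have hden : 0 < p - q := by
    refine pos_of_mul_pos_right (a := s₃ - s₂) ?_ (sub_pos.2 h₂₃).le
    linarith
  constructor
  · rw [lt_div_iff₀ hden]
    linarith
  · rw [div_lt_iff₀ hden]
    linarith

theorem stmt_3_general (r a1 a2 a3 m1 m2 e1 e2 s1 s2 s3 A1 A2 E1 E2 Da Dm : ℝ)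
    (hr : 0 < r) (ha1 : 0 < a1) (ha2 : 0 < a2) (ha3 : 0 < a3)
    (he2 : 0 < e2)
    (hs1 : s1 = m1 / a1) (hs2 : s2 = m2 / a2)
    (h12 : s1 < s2) (h23 : s2 < s3)
    (hA1 : A1 = a1 * a3 * (s3 - s1) / r) (hA2 : A2 = a2 * a3 * (s3 - s2) / r)
    (hE1 : E1 = e1 / A1) (hE2 : E2 = e2 / A2)
    (hDa : Da = a2 * e1 - a1 * e2) (hDm : Dm = m2 * e1 - m1 * e2)
    (h : E1 > E2) :
    s2 < Dm / Da ∧ Dm / Da < s3 := by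
  have hA1' : A1 = a1 * (s3 - s1) * (a3 / r) := by rw [hA1]; ring
  have hA2' : A2 = a2 * (s3 - s2) * (a3 / r) := by rw [hA2]; ring
  rw [hE1, hE2, hA1', hA2'] at h
  have hcross : a1 * e2 * (s3 - s1) < a2 * e1 * (s3 - s2) := by
    have := mul_lt_mul_of_div_mul_lt_div_mul (by positivity) (mul_pos ha1 (by linarith))
      (mul_pos ha2 (by linarith)) h
    linarith
  have hDm' : Dm = s2 * (a2 * e1) - s1 * (a1 * e2) := by
    rw [hDm, hs1, hs2]; field_simp
  rw [hDm', hDa]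
  exact extrapolate_mem_Ioo h12 h23 (mul_pos ha1 he2) hcross

/-- If η₁* > η₂* then σ₂ < Δ_μ/Δ_α < σ₃. -/
theorem stmt_3 (r a1 a2 a3 m1 m2 m3 e1 e2 s1 s2 s3 A1 A2 E1 E2 Da Dm : ℝ)
    (hr : 0 < r) (ha1 : 0 < a1) (ha2 : 0 < a2) (ha3 : 0 < a3)
    (hm1 : 0 < m1) (hm2 : 0 < m2) (hm3 : 0 < m3) (he1 : 0 < e1) (he2 : 0 < e2)
    (hs1 : s1 = m1 / a1) (hs2 : s2 = m2 / a2) (hs3 : s3 = m3 / a3)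
    (h12 : s1 < s2) (h23 : s2 < s3)
    (hA1 : A1 = a1 * a3 * (s3 - s1) / r) (hA2 : A2 = a2 * a3 * (s3 - s2) / r)
    (hE1 : E1 = e1 / A1) (hE2 : E2 = e2 / A2)
    (hDa : Da = a2 * e1 - a1 * e2) (hDm : Dm = m2 * e1 - m1 * e2)
    (h : E1 > E2) :
    s2 < Dm / Da ∧ Dm / Da < s3 :=
  stmt_3_general r a1 a2 a3 m1 m2 e1 e2 s1 s2 s3 A1 A2 E1 E2 Da Dm hr ha1 ha2 ha3 he2 hs1 hs2 h12
    h23 hA1 hA2 hE1 hE2 hDa hDm h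
end

section
/- Assume η₁* > η₂* > 1. With K₁ = σ₁η₁*/(η₁*-1), K₂ = σ₃η₁*/(η₁*-1), K₃ = σ₂η₂*/(η₂*-1), K₄ = σ₃η₂*/(η₂*-1), K₅ = (Δ_μ/Δ_α)·η₁*/(η₁*-1), K₆ = (Δ_μ/Δ_α)·η₂*/(η₂*-1), one has K₁ < K₅ < K₂ and K₃ < K₆ < K₄. -/
/-! The cross-multiplied form of `η₂* < η₁*` is exactly `Δ_α σ₃ - Δ_μ > 0`, while
`Δ_μ - Δ_α σ₂ = α₁η₂(σ₂ - σ₁) > 0`; together they force `Δ_α > 0` and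
`σ₂ < Δ_μ / Δ_α < σ₃`. Each `K` is the image of `σ₁, σ₂, σ₃` or `Δ_μ / Δ_α` under the
increasing map `x ↦ x η / (η - 1)` (with `η = η₁*` or `η₂*`), which preserves these inequalities. -/

open Set

lemma div_mul_lt_div_mul_iff {c x y u v : ℝ} (hc : 0 < c) (hx : 0 < x) (hy : 0 < y) :
    u / (c * y) < v / (c * x) ↔ u * x < v * y := by
  rw [div_lt_div_iff₀ (by positivity) (by positivity), mul_left_comm, mul_left_comm v,
    mul_lt_mul_iff_right₀ hc]

lemma div_mem_Ioo_of_mul_lt_of_lt_mul {a b p q : ℝ} (hpq : p < q) (hp : a * p < b)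
    (hq : b < a * q) : b / a ∈ Ioo p q := by
  have ha : 0 < a := pos_of_mul_pos_left (by linear_combination hq + hp) (sub_pos.2 hpq).le
  exact ⟨(lt_div_iff₀ ha).2 (by linarith), (div_lt_iff₀ ha).2 (by linarith)⟩

lemma div_sub_mem_Ioo {a1 a2 e1 e2 s1 s2 s3 : ℝ} (ha1 : 0 < a1) (he2 : 0 < e2)
    (h12 : s1 < s2) (h23 : s2 < s3) (h : e2 * (a1 * (s3 - s1)) < e1 * (a2 * (s3 - s2))) :
    (a2 * s2 * e1 - a1 * s1 * e2) / (a2 * e1 - a1 * e2) ∈ Ioo s2 s3 := by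
  have hpos : 0 < e2 * (a1 * (s2 - s1)) := by have := sub_pos.2 h12; positivity
  exact div_mem_Ioo_of_mul_lt_of_lt_mul h23 (by linear_combination hpos) (by linear_combination h)

lemma strictMono_mul_div_sub_one {E : ℝ} (hE : 1 < E) : StrictMono fun x : ℝ => x * E / (E - 1) :=
  fun _ _ h => div_lt_div_of_pos_right (mul_lt_mul_of_pos_right h (by linarith)) (by linarith)

theorem stmt_4_general (r a1 a2 a3 m1 m2 e1 e2 s1 s2 s3 A1 A2 E1 E2 Da Dm K1 K2 K3 K4 K5 K6 : ℝ)
    (hr : 0 < r) (ha1 : 0 < a1) (ha2 : 0 < a2) (ha3 : 0 < a3)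
    (he2 : 0 < e2)
    (hs1 : s1 = m1 / a1) (hs2 : s2 = m2 / a2)
    (h12 : s1 < s2) (h23 : s2 < s3)
    (hA1 : A1 = a1 * a3 * (s3 - s1) / r) (hA2 : A2 = a2 * a3 * (s3 - s2) / r)
    (hE1 : E1 = e1 / A1) (hE2 : E2 = e2 / A2)
    (hDa : Da = a2 * e1 - a1 * e2) (hDm : Dm = m2 * e1 - m1 * e2)
    (h21 : E1 > E2) (h2 : E2 > 1)
    (hK1 : K1 = s1 * E1 / (E1 - 1)) (hK2 : K2 = s3 * E1 / (E1 - 1))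
    (hK3 : K3 = s2 * E2 / (E2 - 1)) (hK4 : K4 = s3 * E2 / (E2 - 1))
    (hK5 : K5 = (Dm / Da) * E1 / (E1 - 1)) (hK6 : K6 = (Dm / Da) * E2 / (E2 - 1)) :
    (K1 < K5 ∧ K5 < K2) ∧ (K3 < K6 ∧ K6 < K4) := by
  obtain ⟨hlo, hhi⟩ : Dm / Da ∈ Ioo s2 s3 := by
    have hm1 : m1 = a1 * s1 := by rw [hs1, mul_div_cancel₀ _ ha1.ne']
    have hm2 : m2 = a2 * s2 := by rw [hs2, mul_div_cancel₀ _ ha2.ne']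
    have hA1' : A1 = a3 / r * (a1 * (s3 - s1)) := by rw [hA1]; ring
    have hA2' : A2 = a3 / r * (a2 * (s3 - s2)) := by rw [hA2]; ring
    rw [gt_iff_lt, hE1, hE2, hA1', hA2', div_mul_lt_div_mul_iff (by positivity)
      (mul_pos ha1 (sub_pos.2 (h12.trans h23))) (mul_pos ha2 (sub_pos.2 h23))] at h21
    rw [hDm, hDa, hm1, hm2]
    exact div_sub_mem_Ioo ha1 he2 h12 h23 h21
  have mono1 := strictMono_mul_div_sub_one (h2.trans h21)
  have mono2 := strictMono_mul_div_sub_one h2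
  subst hK1 hK2 hK3 hK4 hK5 hK6
  exact ⟨⟨mono1 (h12.trans hlo), mono1 hhi⟩, mono2 hlo, mono2 hhi⟩

/-- If η₁* > η₂* > 1 then K₁ < K₅ < K₂ and K₃ < K₆ < K₄. -/
theorem stmt_4 (r a1 a2 a3 m1 m2 m3 e1 e2 s1 s2 s3 A1 A2 E1 E2 Da Dm K1 K2 K3 K4 K5 K6 : ℝ)
    (hr : 0 < r) (ha1 : 0 < a1) (ha2 : 0 < a2) (ha3 : 0 < a3)
    (hm1 : 0 < m1) (hm2 : 0 < m2) (hm3 : 0 < m3) (he1 : 0 < e1) (he2 : 0 < e2)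
    (hs1 : s1 = m1 / a1) (hs2 : s2 = m2 / a2) (hs3 : s3 = m3 / a3)
    (h12 : s1 < s2) (h23 : s2 < s3)
    (hA1 : A1 = a1 * a3 * (s3 - s1) / r) (hA2 : A2 = a2 * a3 * (s3 - s2) / r)
    (hE1 : E1 = e1 / A1) (hE2 : E2 = e2 / A2)
    (hDa : Da = a2 * e1 - a1 * e2) (hDm : Dm = m2 * e1 - m1 * e2)
    (h21 : E1 > E2) (h2 : E2 > 1)
    (hK1 : K1 = s1 * E1 / (E1 - 1)) (hK2 : K2 = s3 * E1 / (E1 - 1))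
    (hK3 : K3 = s2 * E2 / (E2 - 1)) (hK4 : K4 = s3 * E2 / (E2 - 1))
    (hK5 : K5 = (Dm / Da) * E1 / (E1 - 1)) (hK6 : K6 = (Dm / Da) * E2 / (E2 - 1)) :
    (K1 < K5 ∧ K5 < K2) ∧ (K3 < K6 ∧ K6 < K4) :=
  stmt_4_general r a1 a2 a3 m1 m2 e1 e2 s1 s2 s3 A1 A2 E1 E2 Da Dm K1 K2 K3 K4 K5 K6 hr ha1 ha2 ha3
    he2 hs1 hs2 h12 h23 hA1 hA2 hE1 hE2 hDa hDm h21 h2 hK1 hK2 hK3 hK4 hK5 hK6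
end

section
/- With β=γ=0, the point G₁₁₁ with S = Δ_μ/Δ_α, I₁ = (rA₂/Δ_α)(1 - η₂*(1 - Δ_μ/(KΔ_α))), I₂ = (rA₁/Δ_α)(η₁*(1 - Δ_μ/(KΔ_α)) - 1), I₁₂ = rA₃/Δ_α is an equilibrium of the coinfection system, where A₃ = α₁α₂(σ₂-σ₁)/r. -/
/-!
`S = Δ_μ/Δ_α` and `I₁₂ = rA₃/Δ_α` are the Cramer solution of the second and third bracket
equations (`rA₃ = α₁μ₂ - α₂μ₁`); given these, the first and fourth brackets are linear in
`I₁, I₂` with the same determinant `Δ_α`. So after multiplying every bracket by `Δ_α` each one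
vanishes by a polynomial identity in the rates `rAᵢ`, `ηᵢ = ηᵢ* Aᵢ`, `μᵢ`, `αᵢ`.
-/

section CoinfectionEquilibrium

variable {F : Type*} [Field F]

/-- The equilibrium in cleared-denominator form, with `rA₁ = α₁μ₃ - α₃μ₁`, `rA₂ = α₂μ₃ - α₃μ₂`,
`rA₃ = α₁μ₂ - α₂μ₁`. -/
theorem coinfection_equilibrium_of_mul_eq
    {r K a1 a2 a3 m1 m2 m3 e1 e2 D S I1 I2 I12 : F}
    (hD : D ≠ 0) (hDa : D = a2 * e1 - a1 * e2)
    (hS : D * S = m2 * e1 - m1 * e2)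
    (hI1 : D * I1 = a2 * m3 - a3 * m2 - r * e2 * (1 - S / K))
    (hI2 : D * I2 = r * e1 * (1 - S / K) - (a1 * m3 - a3 * m1))
    (hI12 : D * I12 = a1 * m2 - a2 * m1) :
    (r * (1 - S / K) - a1 * I1 - a2 * I2 - a3 * I12) * S = 0 ∧
    (a1 * S - e1 * I12 - m1) * I1 = 0 ∧
    (a2 * S - e2 * I12 - m2) * I2 = 0 ∧
    (a3 * S + e1 * I1 + e2 * I2 - m3) * I12 = 0 := by
  refine ⟨?_, ?_, ?_, ?_⟩ <;> refine mul_eq_zero_of_left (mul_left_cancel₀ hD ?_) _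
  · linear_combination r * (1 - S / K) * hDa - a1 * hI1 - a2 * hI2 - a3 * hI12
  · linear_combination a1 * hS - e1 * hI12 - m1 * hDa
  · linear_combination a2 * hS - e2 * hI12 - m2 * hDa
  · linear_combination a3 * hS + e1 * hI1 + e2 * hI2 - m3 * hDa

theorem mul_mul_div_sub_div_div {r a b m n : F} (hr : r ≠ 0) (ha : a ≠ 0) (hb : b ≠ 0) :
    r * (a * b * (n / b - m / a) / r) = a * n - b * m := by
  field_simp

end CoinfectionEquilibrium

theorem stmt_8_general (r K a1 a2 a3 m1 m2 m3 e1 e2 s1 s2 s3 A1 A2 A3 E1 E2 Da Dm S I1 I2 I12 : ℝ)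
    (hr : 0 < r) (ha1 : 0 < a1) (ha2 : 0 < a2) (ha3 : 0 < a3)
    (hs1 : s1 = m1 / a1) (hs2 : s2 = m2 / a2) (hs3 : s3 = m3 / a3)
    (h12 : s1 < s2) (h23 : s2 < s3)
    (hA1 : A1 = a1 * a3 * (s3 - s1) / r) (hA2 : A2 = a2 * a3 * (s3 - s2) / r)
    (hA3 : A3 = a1 * a2 * (s2 - s1) / r)
    (hE1 : E1 = e1 / A1) (hE2 : E2 = e2 / A2)
    (hDa : Da = a2 * e1 - a1 * e2) (hDm : Dm = m2 * e1 - m1 * e2)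
    (hDane : Da ≠ 0)
    (hS : S = Dm / Da)
    (hI1 : I1 = (r * A2 / Da) * (1 - E2 * (1 - Dm / (K * Da))))
    (hI2 : I2 = (r * A1 / Da) * (E1 * (1 - Dm / (K * Da)) - 1))
    (hI12 : I12 = r * A3 / Da) :
    (r * (1 - S / K) - a1 * I1 - a2 * I2 - a3 * I12) * S = 0 ∧
    (a1 * S - e1 * I12 - m1) * I1 = 0 ∧
    (a2 * S - e2 * I12 - m2) * I2 = 0 ∧
    (a3 * S + e1 * I1 + e2 * I2 - m3) * I12 = 0 := by
  have hA1ne : A1 ≠ 0 := hA1 ▸ by positivity [sub_pos.2 (h12.trans h23)]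
  have hA2ne : A2 ≠ 0 := hA2 ▸ by positivity [sub_pos.2 h23]
  have hrA1 : r * A1 = a1 * m3 - a3 * m1 := by
    rw [hA1, hs1, hs3, mul_mul_div_sub_div_div hr.ne' ha1.ne' ha3.ne']
  have hrA2 : r * A2 = a2 * m3 - a3 * m2 := by
    rw [hA2, hs2, hs3, mul_mul_div_sub_div_div hr.ne' ha2.ne' ha3.ne']
  have hrA3 : r * A3 = a1 * m2 - a2 * m1 := by
    rw [hA3, hs1, hs2, mul_mul_div_sub_div_div hr.ne' ha1.ne' ha2.ne']
  have hE1A1 : E1 * A1 = e1 := hE1 ▸ div_mul_cancel₀ e1 hA1ne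
  have hE2A2 : E2 * A2 = e2 := hE2 ▸ div_mul_cancel₀ e2 hA2ne
  have hSK : Dm / (K * Da) = S / K := by rw [hS, div_div, mul_comm]
  refine coinfection_equilibrium_of_mul_eq hDane hDa ?_ ?_ ?_ ?_
  · rw [hS, hDm, mul_div_cancel₀ _ hDane]
  · rw [hI1, hSK, ← mul_assoc, mul_div_cancel₀ _ hDane]
    linear_combination hrA2 - r * (1 - S / K) * hE2A2
  · rw [hI2, hSK, ← mul_assoc, mul_div_cancel₀ _ hDane]
    linear_combination r * (1 - S / K) * hE1A1 - hrA1
  · rw [hI12, mul_div_cancel₀ _ hDane, hrA3]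

/-- with β=γ=0, the point G₁₁₁ is an equilibrium of the system. -/
theorem stmt_8 (r K a1 a2 a3 m1 m2 m3 e1 e2 s1 s2 s3 A1 A2 A3 E1 E2 Da Dm S I1 I2 I12 : ℝ)
    (hr : 0 < r) (hK : 0 < K) (ha1 : 0 < a1) (ha2 : 0 < a2) (ha3 : 0 < a3)
    (hm1 : 0 < m1) (hm2 : 0 < m2) (hm3 : 0 < m3) (he1 : 0 < e1) (he2 : 0 < e2)
    (hs1 : s1 = m1 / a1) (hs2 : s2 = m2 / a2) (hs3 : s3 = m3 / a3)
    (h12 : s1 < s2) (h23 : s2 < s3)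
    (hA1 : A1 = a1 * a3 * (s3 - s1) / r) (hA2 : A2 = a2 * a3 * (s3 - s2) / r)
    (hA3 : A3 = a1 * a2 * (s2 - s1) / r)
    (hE1 : E1 = e1 / A1) (hE2 : E2 = e2 / A2)
    (hDa : Da = a2 * e1 - a1 * e2) (hDm : Dm = m2 * e1 - m1 * e2)
    (hDane : Da ≠ 0)
    (hS : S = Dm / Da)
    (hI1 : I1 = (r * A2 / Da) * (1 - E2 * (1 - Dm / (K * Da))))
    (hI2 : I2 = (r * A1 / Da) * (E1 * (1 - Dm / (K * Da)) - 1))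
    (hI12 : I12 = r * A3 / Da) :
    (r * (1 - S / K) - a1 * I1 - a2 * I2 - a3 * I12) * S = 0 ∧
    (a1 * S - e1 * I12 - m1) * I1 = 0 ∧
    (a2 * S - e2 * I12 - m2) * I2 = 0 ∧
    (a3 * S + e1 * I1 + e2 * I2 - m3) * I12 = 0 :=
  stmt_8_general r K a1 a2 a3 m1 m2 m3 e1 e2 s1 s2 s3 A1 A2 A3 E1 E2 Da Dm S I1 I2 I12 hr ha1 ha2
    ha3 hs1 hs2 hs3 h12 h23 hA1 hA2 hA3 hE1 hE2 hDa hDm hDane hS hI1 hI2 hI12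
end

section
/- If η₁* > η₂* > 1, then the components I₁ and I₂ of G₁₁₁ are positive precisely for K₅ < K < K₆, where K₅ = (Δ_μ/Δ_α)·η₁*/(η₁*-1) and K₆ = (Δ_μ/Δ_α)·η₂*/(η₂*-1). -/
private lemma aux_pos_cancel {c x : ℝ} (hc : 0 < c) (h : 0 < c * x) : 0 < x := by
  by_contra hx
  push_neg at hx
  nlinarith

private lemma aux_iff1 (c K Da Dm E K0 : ℝ) (hc : 0 < c) (hK : 0 < K) (hDa : 0 < Da)
    (hE : 0 < E - 1) (hK0 : K0 * (Da * (E - 1)) = Dm * E) :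
    c * (1 - E * (1 - Dm / (K * Da))) > 0 ↔ K < K0 := by
  have hKDa : 0 < K * Da := mul_pos hK hDa
  have ht : Dm / (K * Da) * (K * Da) = Dm := div_mul_cancel₀ _ (ne_of_gt hKDa)
  set t : ℝ := Dm / (K * Da)
  have hDE : 0 < Da * (E - 1) := mul_pos hDa hE
  constructor
  · intro h
    have hx : 0 < 1 - E * (1 - t) := aux_pos_cancel hc h
    have h3 : (E - 1) * (K * Da) < E * t * (K * Da) := by
      apply mul_lt_mul_of_pos_right _ hKDa
      nlinarith
    nlinarith
  · intro h
    apply mul_pos hc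
    have h3 : (K * Da) * (E - 1) < Dm * E := by nlinarith
    nlinarith

private lemma aux_iff2 (c K Da Dm E K0 : ℝ) (hc : 0 < c) (hK : 0 < K) (hDa : 0 < Da)
    (hE : 0 < E - 1) (hK0 : K0 * (Da * (E - 1)) = Dm * E) :
    c * (E * (1 - Dm / (K * Da)) - 1) > 0 ↔ K0 < K := by
  have hKDa : 0 < K * Da := mul_pos hK hDa
  have ht : Dm / (K * Da) * (K * Da) = Dm := div_mul_cancel₀ _ (ne_of_gt hKDa)
  set t : ℝ := Dm / (K * Da)
  have hDE : 0 < Da * (E - 1) := mul_pos hDa hE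
  constructor
  · intro h
    have hx : 0 < E * (1 - t) - 1 := aux_pos_cancel hc h
    have h3 : E * t * (K * Da) < (E - 1) * (K * Da) := by
      apply mul_lt_mul_of_pos_right _ hKDa
      nlinarith
    nlinarith
  · intro h
    apply mul_pos hc
    have h3 : Dm * E < (K * Da) * (E - 1) := by nlinarith
    nlinarith


/-- if η₁* > η₂* > 1 then the components I₁(K), I₂(K) of G₁₁₁ are
positive precisely for K₅ < K < K₆. -/
theorem stmt_9 (r a1 a2 a3 m1 m2 m3 e1 e2 s1 s2 s3 A1 A2 E1 E2 Da Dm K5 K6 : ℝ)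
    (hr : 0 < r) (ha1 : 0 < a1) (ha2 : 0 < a2) (ha3 : 0 < a3)
    (hm1 : 0 < m1) (hm2 : 0 < m2) (hm3 : 0 < m3) (he1 : 0 < e1) (he2 : 0 < e2)
    (hs1 : s1 = m1 / a1) (hs2 : s2 = m2 / a2) (hs3 : s3 = m3 / a3)
    (h12 : s1 < s2) (h23 : s2 < s3)
    (hA1 : A1 = a1 * a3 * (s3 - s1) / r) (hA2 : A2 = a2 * a3 * (s3 - s2) / r)
    (hE1 : E1 = e1 / A1) (hE2 : E2 = e2 / A2)
    (hDa : Da = a2 * e1 - a1 * e2) (hDm : Dm = m2 * e1 - m1 * e2)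
    (h21 : E1 > E2) (h2 : E2 > 1)
    (hK5 : K5 = (Dm / Da) * E1 / (E1 - 1)) (hK6 : K6 = (Dm / Da) * E2 / (E2 - 1)) :
    ∀ K : ℝ, 0 < K →
      (((r * A2 / Da) * (1 - E2 * (1 - Dm / (K * Da))) > 0 ∧
        (r * A1 / Da) * (E1 * (1 - Dm / (K * Da)) - 1) > 0) ↔
       (K5 < K ∧ K < K6)) := by
  intro K hK
  have hs1p : 0 < s1 := by rw [hs1]; positivity
  have hs2p : 0 < s2 := lt_trans hs1p h12
  have h13 : s1 < s3 := lt_trans h12 h23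
  have hA1p : 0 < A1 := by
    rw [hA1]; have h := sub_pos.mpr h13; positivity
  have hA2p : 0 < A2 := by
    rw [hA2]; have h := sub_pos.mpr h23; positivity
  have hm1' : m1 = s1 * a1 := by rw [hs1]; field_simp
  have hm2' : m2 = s2 * a2 := by rw [hs2]; field_simp
  -- from E1 > E2 : e1 * A2 > e2 * A1
  have hEA : e2 * A1 < e1 * A2 := by
    rw [hE1, hE2] at h21
    exact (div_lt_div_iff₀ hA2p hA1p).mp h21
  have hA1r : A1 * r = a1 * a3 * (s3 - s1) := by
    rw [hA1]; field_simp
  have hA2r : A2 * r = a2 * a3 * (s3 - s2) := by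
    rw [hA2]; field_simp
  have hEA2 : e2 * (A1 * r) < e1 * (A2 * r) := by
    have h := mul_lt_mul_of_pos_right hEA hr
    linarith [h]
  rw [hA1r, hA2r] at hEA2
  have hEA' : e2 * a1 * (s3 - s1) < e1 * a2 * (s3 - s2) := by
    have h3 : a3 * (e2 * a1 * (s3 - s1)) < a3 * (e1 * a2 * (s3 - s2)) := by
      linarith [hEA2]
    exact lt_of_mul_lt_mul_left h3 (le_of_lt ha3)
  have hDas3 : Dm < Da * s3 := by
    rw [hDa, hDm, hm1', hm2']; linarith [hEA']
  have hDms2 : Da * s2 < Dm := by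
    rw [hDa, hDm, hm1', hm2']
    linarith [mul_pos (mul_pos ha1 he2) (sub_pos.mpr h12)]
  have hDap : 0 < Da := by
    by_contra h
    push_neg at h
    nlinarith [sub_pos.mpr h23]
  have hDmp : 0 < Dm := lt_trans (mul_pos hDap hs2p) hDms2
  have hKDa : 0 < K * Da := mul_pos hK hDap
  have hE2p : (0:ℝ) < E2 - 1 := sub_pos.mpr h2
  have hE1p : (0:ℝ) < E1 - 1 := sub_pos.mpr (lt_trans h2 h21)
  have hK6' : K6 * (Da * (E2 - 1)) = Dm * E2 := by
    rw [hK6]; field_simp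
  have hK5' : K5 * (Da * (E1 - 1)) = Dm * E1 := by
    rw [hK5]; field_simp
  have hc2 : 0 < r * A2 / Da := by positivity
  have hc1 : 0 < r * A1 / Da := by positivity
  rw [aux_iff1 (r * A2 / Da) K Da Dm E2 K6 hc2 hK hDap hE2p hK6',
      aux_iff2 (r * A1 / Da) K Da Dm E1 K5 hc1 hK hDap hE1p hK5', and_comm]
end
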